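/- Let n ≥ 3 and let φ be a permutation of I = {1,…,n}. The dual configuration 𝔐°_{(n,φ)} (whose points are the blocks of 𝔐_{(n,φ)}, whose blocks are the points of 𝔐_{(n,φ)}, and whose incidence is the reversed membership relation) is isomorphic to 𝔐_{(n,φ)}. -/

import Mathlib

/-!
A permutation is conjugate to its inverse (both have the same cycle type); pick `d` with
`φ ∘ d = d ∘ φ⁻¹`. Sending `a_i ↦ B_{d i}` and `b_i ↦ A_{d i}` is a bijection from points to blocks
under which the pencil of a point becomes a block: the blocks through `a_j` (resp. `b_j`) are
the images of the points of `B_{d⁻¹ j}` (resp. `A_{d⁻¹ j}`). This is the required isomorphism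
between `𝔐_{(n,φ)}` and its dual.
-/

abbrev MPoint (n : ℕ) := Fin n ⊕ Fin n

/-- The block `A_i = (A \ {a_i}) ∪ {b_i}`. -/
def Ablock (n : ℕ) (i : Fin n) : Set (MPoint n) :=
  Sum.inl '' {j | j ≠ i} ∪ {Sum.inr i}

/-- The block `B_i = (B \ {b_i}) ∪ {a_{φ(i)}}`. -/
def Bblock (n : ℕ) (φ : Equiv.Perm (Fin n)) (i : Fin n) : Set (MPoint n) :=
  Sum.inr '' {j | j ≠ i} ∪ {Sum.inl (φ i)}

def ABlocks (n : ℕ) : Set (Set (MPoint n)) := Set.range (Ablock n)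

def BBlocks (n : ℕ) (φ : Equiv.Perm (Fin n)) : Set (Set (MPoint n)) := Set.range (Bblock n φ)

/-- The blocks of the Möbius `n`-pair `𝔐_{(n,φ)}`; its point set is all of `MPoint n`. -/
def MBlocks (n : ℕ) (φ : Equiv.Perm (Fin n)) : Set (Set (MPoint n)) :=
  ABlocks n ∪ BBlocks n φ

/-- `f` is the inverse of `g`: the pencil of `p` pulls back along `g` to the block `h p`. -/
theorem exists_dual_iso_of_incidence_symm {P : Type*} {𝓑 : Set (Set P)} {g h : P → Set P}
    (hg : Function.Injective g) (hg𝓑 : Set.range g = 𝓑) (hh𝓑 : Set.range h = 𝓑)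
    (hgh : ∀ p q, p ∈ g q ↔ q ∈ h p) :
    ∃ f : 𝓑 ≃ P, ∀ T : Set 𝓑, (∃ p : P, T = {l | p ∈ l.1}) ↔ f '' T ∈ 𝓑 := by
  set e : P ≃ 𝓑 := (Equiv.ofInjective g hg).trans (Equiv.setCongr hg𝓑)
  have hpencil : ∀ p, e ⁻¹' {l | p ∈ l.1} = h p := fun p => Set.ext fun q => hgh p q
  have mem_𝓑 : ∀ S, S ∈ Set.range h ↔ S ∈ 𝓑 := fun S => by rw [hh𝓑]
  refine ⟨e.symm, fun T => ?_⟩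
  rw [Equiv.image_symm_eq_preimage, ← mem_𝓑]
  constructor
  · rintro ⟨p, rfl⟩
    exact ⟨p, (hpencil p).symm⟩
  · rintro ⟨p, hp⟩
    exact ⟨p, e.surjective.preimage_injective (hp.symm.trans (hpencil p).symm)⟩

theorem Equiv.Perm.exists_mul_eq_mul_inv {α : Type*} [Fintype α] [DecidableEq α]
    (φ : Equiv.Perm α) : ∃ d : Equiv.Perm α, φ * d = d * φ⁻¹ := by
  obtain ⟨d, hd⟩ := isConj_iff.mp
    (Equiv.Perm.isConj_iff_cycleType_eq.mpr (Equiv.Perm.cycleType_inv φ) : IsConj φ⁻¹ φ)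
  exact ⟨d, eq_mul_inv_iff_mul_eq.mp hd.symm⟩

section MobiusPair

variable {n : ℕ} {φ : Equiv.Perm (Fin n)}

@[simp] theorem inl_mem_Ablock {j i : Fin n} : Sum.inl j ∈ Ablock n i ↔ j ≠ i := by
  simp [Ablock]

@[simp] theorem inr_mem_Ablock {j i : Fin n} : Sum.inr j ∈ Ablock n i ↔ j = i := by
  simp [Ablock]

@[simp] theorem inl_mem_Bblock {j i : Fin n} : Sum.inl j ∈ Bblock n φ i ↔ j = φ i := by
  simp [Bblock]

@[simp] theorem inr_mem_Bblock {j i : Fin n} : Sum.inr j ∈ Bblock n φ i ↔ j ≠ i := by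
  simp [Bblock]

theorem Ablock_injective : Function.Injective (Ablock n) := fun i i' h => by
  have : (Sum.inr i : MPoint n) ∈ Ablock n i' := by rw [← h]; exact inr_mem_Ablock.mpr rfl
  simpa using this

theorem Bblock_injective : Function.Injective (Bblock n φ) := fun i i' h => by
  by_contra hne
  have : (Sum.inr i : MPoint n) ∈ Bblock n φ i := by rw [h]; exact inr_mem_Bblock.mpr hne
  simp at this

/-- An `A`-block contains `n - 1 ≥ 2` points of `A`, a `B`-block only one. -/
theorem Ablock_ne_Bblock (hn : 3 ≤ n) (i i' : Fin n) : Ablock n i ≠ Bblock n φ i' := by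
  intro h
  have hcard : 1 < ({i}ᶜ : Finset (Fin n)).card := by
    rw [Finset.card_compl, Finset.card_singleton, Fintype.card_fin]
    omega
  obtain ⟨j₁, hj₁, j₂, hj₂, hne⟩ := Finset.one_lt_card.mp hcard
  have mem_Bblock : ∀ j ∈ ({i}ᶜ : Finset (Fin n)), j = φ i' := fun j hj =>
    inl_mem_Bblock.mp (h ▸ inl_mem_Ablock.mpr (by simpa using hj))
  exact hne ((mem_Bblock j₁ hj₁).trans (mem_Bblock j₂ hj₂).symm)

variable (φ) in
def mobiusCorr (d : Equiv.Perm (Fin n)) : MPoint n → Set (MPoint n)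
  | Sum.inl i => Bblock n φ (d i)
  | Sum.inr i => Ablock n (d i)

theorem range_mobiusCorr (d : Equiv.Perm (Fin n)) : Set.range (mobiusCorr φ d) = MBlocks n φ := by
  ext l
  constructor
  · rintro ⟨i | i, rfl⟩
    exacts [Or.inr ⟨d i, rfl⟩, Or.inl ⟨d i, rfl⟩]
  · rintro (⟨i, rfl⟩ | ⟨i, rfl⟩)
    · exact ⟨Sum.inr (d⁻¹ i), by simp [mobiusCorr]⟩
    · exact ⟨Sum.inl (d⁻¹ i), by simp [mobiusCorr]⟩

theorem mobiusCorr_injective (hn : 3 ≤ n) (d : Equiv.Perm (Fin n)) :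
    Function.Injective (mobiusCorr φ d) := by
  rintro (i | i) (j | j) h
  · exact congrArg Sum.inl (d.injective (Bblock_injective h))
  · exact absurd h.symm (Ablock_ne_Bblock hn _ _)
  · exact absurd h (Ablock_ne_Bblock hn _ _)
  · exact congrArg Sum.inr (d.injective (Ablock_injective h))

theorem mem_mobiusCorr_comm {d : Equiv.Perm (Fin n)} (hd : φ * d = d * φ⁻¹) (p q : MPoint n) :
    p ∈ mobiusCorr φ d q ↔ q ∈ mobiusCorr φ d⁻¹ p := by
  -- the only nontrivial incidence: `a_j ∈ B_{d i} ↔ a_i ∈ B_{d⁻¹ j}`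
  have hφd : ∀ i j : Fin n, j = φ (d i) ↔ i = φ (d⁻¹ j) := by
    have hd' : φ * d⁻¹ = d⁻¹ * φ⁻¹ := by
      simpa only [mul_inv_rev, inv_inv] using (congrArg (·⁻¹) hd).symm
    intro i j
    constructor <;> rintro rfl
    · rw [← Equiv.Perm.mul_apply φ d⁻¹, hd']
      simp
    · rw [← Equiv.Perm.mul_apply φ d, hd]
      simp
  rcases p with j | j <;> rcases q with i | i <;>
    simp only [mobiusCorr, inl_mem_Ablock, inr_mem_Ablock, inl_mem_Bblock, inr_mem_Bblock, ne_eq]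
  · exact hφd i j
  all_goals rw [Equiv.Perm.eq_inv_iff_eq, eq_comm]

end MobiusPair

/-- The dual configuration of 𝔐_{(n,φ)} (points: the blocks; blocks: for each point p
the pencil of blocks through p) is isomorphic to 𝔐_{(n,φ)}. -/
theorem stmt2 (n : ℕ) (hn : 3 ≤ n) (φ : Equiv.Perm (Fin n)) :
    ∃ f : {l : Set (MPoint n) // l ∈ MBlocks n φ} ≃ MPoint n,
      ∀ T : Set {l : Set (MPoint n) // l ∈ MBlocks n φ},
        (∃ p : MPoint n, T = {l | p ∈ l.1}) ↔ (f '' T) ∈ MBlocks n φ := by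
  obtain ⟨d, hd⟩ := φ.exists_mul_eq_mul_inv
  exact exists_dual_iso_of_incidence_symm (mobiusCorr_injective hn d) (range_mobiusCorr d)
    (range_mobiusCorr d⁻¹) (mem_mobiusCorr_comm hd)
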